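/- Let m, n ≥ 1 and let A : Fin m → Fin n → ℕ be an access matrix, where A i j is the number of views of video j from IP i. Fix a video j, and suppose its total view count v_j = ∑_{i} A i j satisfies v_j ≥ 1. Let k : Fin m be an IP with A k j = 0. If A' is the matrix obtained from A by replacing the entry A k j with 1 and leaving all other entries unchanged, then the video entropy of column j strictly increases: H_v'(j) > H_v(j), where H_v'(j) is the video entropy of video j computed from A'. (This is the paper's Proposition 4: for a video j and an incremental view from some IP k, if k has not viewed j before, then the video entropy of j increases.) -/

import Mathlib

open Real Finset

/-- Shannon entropy of a count vector `a : Fin m → ℕ` with total sum `∑ i, a i`: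
`H(a) = -∑ i, (a i / v) * ln (a i / v)` where `v = ∑ i, a i`.
(Terms with `a i = 0` contribute `0` since `Real.log 0 = 0`.) -/
noncomputable def countEntropy {m : ℕ} (a : Fin m → ℕ) : ℝ :=
  -∑ j, ((a j : ℝ) / (∑ i, a i : ℕ)) * Real.log ((a j : ℝ) / (∑ i, a i : ℕ))

/-- The video entropy of video `j` for an access matrix `A : Fin m → Fin n → ℕ`
(`A i j` = number of views of video `j` from IP `i`) is the Shannon entropy of
the `j`-th column of `A`. -/
noncomputable def videoEntropy {m n : ℕ} (A : Fin m → Fin n → ℕ) (j : Fin n) : ℝ :=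
  countEntropy (fun i => A i j)

/-! With `v = ∑ i, a i` and `S = ∑ i, a i log a i`, the entropy of a count vector is
`log v - S / v`. Turning a zero count into a one leaves `S` unchanged (`0 log 0 = 1 log 1 = 0`)
and raises `v` to `v + 1`; since `S ≥ 0`, both `log v` and `-S / v` increase with `v`. -/

lemma div_mul_log_div (a : ℝ) {v : ℝ} (hv : v ≠ 0) :
    a / v * log (a / v) = a * log a / v - a / v * log v := by
  rcases eq_or_ne a 0 with rfl | ha
  · simp
  · rw [log_div ha hv]
    ring

lemma countEntropy_eq_log_sub_div {m : ℕ} (a : Fin m → ℕ) (ha : ∑ i, a i ≠ 0) :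
    countEntropy a =
      log (∑ i, a i : ℕ) - (∑ i, (a i : ℝ) * log (a i)) / (∑ i, a i : ℕ) := by
  have hv : ((∑ i, a i : ℕ) : ℝ) ≠ 0 := Nat.cast_ne_zero.mpr ha
  simp_rw [countEntropy, div_mul_log_div _ hv]
  rw [sum_sub_distrib, ← sum_div, ← sum_mul, ← sum_div, ← Nat.cast_sum, div_self hv]
  ring

lemma log_sub_div_lt_log_sub_div {S v w : ℝ} (hS : 0 ≤ S) (hv : 0 < v) (hvw : v < w) :
    log v - S / v < log w - S / w := by
  have hlog : log v < log w := log_lt_log hv hvw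
  have hdiv : S / w ≤ S / v := div_le_div_of_nonneg_left hS hv hvw.le
  linarith

lemma countEntropy_lt_update_zero_one {m : ℕ} (a : Fin m → ℕ) {k : Fin m} (hk : a k = 0)
    (ha : ∑ i, a i ≠ 0) : countEntropy a < countEntropy (Function.update a k 1) := by
  have hsum : ∑ i, Function.update a k 1 i = ∑ i, a i + 1 := by
    rw [sum_update_of_mem (mem_univ k), sum_eq_add_sum_sdiff_singleton_of_mem (mem_univ k) a, hk]
    ring
  have hmul_log : ∑ i, (Function.update a k 1 i : ℝ) * log (Function.update a k 1 i) =
      ∑ i, (a i : ℝ) * log (a i) := by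
    refine sum_congr rfl fun i _ => ?_
    rcases eq_or_ne i k with rfl | hik
    · simp [hk]
    · rw [Function.update_of_ne hik]
  have hS : 0 ≤ ∑ i, (a i : ℝ) * log (a i) := sum_nonneg fun i _ => by positivity
  rw [countEntropy_eq_log_sub_div a ha, countEntropy_eq_log_sub_div _ (by omega), hsum,
    hmul_log]
  exact log_sub_div_lt_log_sub_div hS (by positivity) (by push_cast; linarith)

theorem videoEntropy_strict_increase_general (m n : ℕ)
    (A A' : Fin m → Fin n → ℕ) (j : Fin n)
    (v : ℕ) (hv : v = ∑ i, A i j) (hv1 : 1 ≤ v)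
    (k : Fin m) (hk : A k j = 0)
    (hA' : ∀ i j', A' i j' = if i = k ∧ j' = j then 1 else A i j') :
    videoEntropy A' j > videoEntropy A j := by
  have hcolumn : (fun i => A' i j) = Function.update (fun i => A i j) k 1 := by
    ext i
    rw [hA', Function.update_apply]
    simp
  rw [gt_iff_lt, videoEntropy, videoEntropy, hcolumn]
  exact countEntropy_lt_update_zero_one _ hk (by omega)

/-- Proposition 4: if video `j` has total view count `v_j ≥ 1`,
IP `k` has not viewed `j` before (`A k j = 0`), and `A'` is obtained from `A`
by setting the entry `(k, j)` to `1` and leaving all other entries unchanged,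
then the video entropy of `j` strictly increases. -/
theorem videoEntropy_strict_increase (m n : ℕ) (hm : 1 ≤ m) (hn : 1 ≤ n)
    (A A' : Fin m → Fin n → ℕ) (j : Fin n)
    (v : ℕ) (hv : v = ∑ i, A i j) (hv1 : 1 ≤ v)
    (k : Fin m) (hk : A k j = 0)
    (hA' : ∀ i j', A' i j' = if i = k ∧ j' = j then 1 else A i j') :
    videoEntropy A' j > videoEntropy A j :=
  videoEntropy_strict_increase_general m n A A' j v hv hv1 k hk hA'
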